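/- For every real α with 1 < α ≤ 2 and every real q > 0: ∫₀¹ x^{α−1}·E_α′(q·x^α)·(1−x)^{α−2} dx = (Γ(α−1)/q)·(α·q·E_α″(q) + (α−1)·E_α′(q) − (α−1)/Γ(α+1)). -/

import Mathlib

/-!
Expanding `E_α′(q x^α) = Σ (n+1) qⁿ x^{αn} / Γ(α(n+1)+1)` and integrating termwise, the `n`-th term
is a Beta integral `B(α(n+1), α-1)`; with `Γ(s+1) = sΓ(s)` it equals `Γ(α-1)/α · qⁿ/Γ(α(n+2)-1)`.
These values are summable since `Γ(α(n+2)-1) ≥ n!`, which justifies the interchange.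
The same series arises on the right: the `n`-th term of `α q E_α″(q)` plus the `(n+1)`-st term of
`(α-1) E_α′(q)` combine, via `Γ(s+1) = s(s-1)Γ(s-1)` at `s = α(n+2)`, into
`qⁿ⁺¹/(α Γ(α(n+2)-1))`, and the `0`-th term of `E_α′(q)` cancels `1/Γ(α+1)`.
-/

noncomputable section

/-- The termwise first derivative of the Mittag-Leffler function,
`E_α′(x) = Σ_{n=1}^∞ n xⁿ⁻¹ / Γ(αn+1) = Σ_{n=0}^∞ (n+1) xⁿ / Γ(α(n+1)+1)`. -/
def mittagLefflerDeriv (α x : ℝ) : ℝ :=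
  ∑' n : ℕ, (n + 1 : ℝ) * x ^ n / Real.Gamma (α * (n + 1) + 1)

/-- The termwise second derivative of the Mittag-Leffler function,
`E_α″(x) = Σ_{n=2}^∞ n(n-1) xⁿ⁻² / Γ(αn+1) = Σ_{n=0}^∞ (n+2)(n+1) xⁿ / Γ(α(n+2)+1)`. -/
def mittagLefflerDeriv2 (α x : ℝ) : ℝ :=
  ∑' n : ℕ, (n + 2 : ℝ) * (n + 1 : ℝ) * x ^ n / Real.Gamma (α * (n + 2) + 1)

open MeasureTheory Set

theorem Real.Gamma_add_one_eq_mul_mul_Gamma_sub_one {s : ℝ} (hs : s ≠ 0) (hs' : s - 1 ≠ 0) :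
    Real.Gamma (s + 1) = s * (s - 1) * Real.Gamma (s - 1) := by
  have h := Real.Gamma_add_one hs'
  rw [sub_add_cancel] at h
  rw [Real.Gamma_add_one hs, h, mul_assoc]

theorem summable_pow_div_Gamma_of_le {s : ℕ → ℝ} (hs : ∀ n : ℕ, (n : ℝ) + 1 ≤ s n) (x : ℝ) :
    Summable fun n : ℕ => x ^ n / Real.Gamma (s n) := by
  refine (Real.summable_pow_div_factorial |x|).of_norm_bounded_eventually_nat ?_
  filter_upwards [Filter.eventually_ge_atTop 1] with n hn
  have h2 : (2 : ℝ) ≤ n + 1 := by norm_cast; omega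
  have hfac : (n.factorial : ℝ) ≤ Real.Gamma (s n) := by
    rw [← Real.Gamma_nat_eq_factorial]
    exact Real.Gamma_strictMonoOn_Ici.monotoneOn h2 (h2.trans (hs n)) (hs n)
  rw [norm_div, norm_pow, Real.norm_eq_abs, Real.norm_of_nonneg (hfac.trans' (by positivity))]
  gcongr

theorem Complex.ofReal_rpow_mul_one_sub_rpow {x : ℝ} (hx : x ∈ Icc (0 : ℝ) 1) (a b : ℝ) :
    ((x ^ (a - 1) * (1 - x) ^ (b - 1) : ℝ) : ℂ)
      = (x : ℂ) ^ ((a : ℂ) - 1) * (1 - (x : ℂ)) ^ ((b : ℂ) - 1) := by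
  rw [Complex.ofReal_mul, Complex.ofReal_cpow hx.1, Complex.ofReal_cpow (sub_nonneg.2 hx.2)]
  push_cast
  rfl

theorem integrableOn_rpow_mul_one_sub_rpow {a b : ℝ} (ha : 0 < a) (hb : 0 < b) :
    IntegrableOn (fun x : ℝ => x ^ (a - 1) * (1 - x) ^ (b - 1)) (Ioc 0 1) := by
  refine (Complex.betaIntegral_convergent (u := a) (v := b) (by simpa) (by simpa)).1.re.congr ?_
  filter_upwards [ae_restrict_mem measurableSet_Ioc] with x hx
  simp [← Complex.ofReal_rpow_mul_one_sub_rpow (Ioc_subset_Icc_self hx)]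

theorem integral_rpow_mul_one_sub_rpow {a b : ℝ} (ha : 0 < a) (hb : 0 < b) :
    ∫ x in (0 : ℝ)..1, x ^ (a - 1) * (1 - x) ^ (b - 1)
      = Real.Gamma a * Real.Gamma b / Real.Gamma (a + b) := by
  have h := Complex.betaIntegral_eq_Gamma_mul_div a b (by simpa) (by simpa)
  rw [Complex.betaIntegral, ← intervalIntegral.integral_congr fun x hx =>
      Complex.ofReal_rpow_mul_one_sub_rpow (by rwa [uIcc_of_le zero_le_one] at hx) a b,
    intervalIntegral.integral_ofReal, ← Complex.ofReal_add, Complex.Gamma_ofReal,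
    Complex.Gamma_ofReal, Complex.Gamma_ofReal] at h
  exact_mod_cast h

theorem integral_tsum_mul_rpow_mul_one_sub_rpow {c s : ℕ → ℝ} {b : ℝ} (hs : ∀ n, 0 < s n)
    (hb : 0 < b)
    (hsum : Summable fun n => ‖c n‖ * (Real.Gamma (s n) * Real.Gamma b / Real.Gamma (s n + b))) :
    ∫ x in (0 : ℝ)..1, ∑' n, c n * (x ^ (s n - 1) * (1 - x) ^ (b - 1))
      = ∑' n, c n * (Real.Gamma (s n) * Real.Gamma b / Real.Gamma (s n + b)) := by
  have hbeta (n : ℕ) : ∫ x in Ioc (0 : ℝ) 1, x ^ (s n - 1) * (1 - x) ^ (b - 1)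
      = Real.Gamma (s n) * Real.Gamma b / Real.Gamma (s n + b) := by
    rw [← intervalIntegral.integral_of_le zero_le_one, integral_rpow_mul_one_sub_rpow (hs n) hb]
  rw [intervalIntegral.integral_of_le zero_le_one, ← integral_tsum_of_summable_integral_norm]
  · simp only [integral_const_mul, hbeta]
  · exact fun n => (integrableOn_rpow_mul_one_sub_rpow (hs n) hb).const_mul (c n)
  · refine hsum.congr fun n => ?_
    rw [← hbeta, ← integral_const_mul]
    refine setIntegral_congr_fun measurableSet_Ioc fun x hx => ?_
    rw [norm_mul, Real.norm_of_nonneg (mul_nonneg (Real.rpow_nonneg hx.1.le _)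
      (Real.rpow_nonneg (sub_nonneg.2 hx.2) _))]

theorem integral_rpow_mul_mittagLefflerDeriv_mul_one_sub_rpow {α q : ℝ} (hα : 1 < α)
    (hq : 0 < q) :
    ∫ x in (0 : ℝ)..1, x ^ (α - 1) * mittagLefflerDeriv α (q * x ^ α) * (1 - x) ^ (α - 2)
      = Real.Gamma (α - 1) / α * ∑' n : ℕ, q ^ n / Real.Gamma (α * (n + 2) - 1) := by
  set c : ℕ → ℝ := fun n => (n + 1) * q ^ n / Real.Gamma (α * (n + 1) + 1)
  have hs (n : ℕ) : 0 < α * (n + 1) := by positivity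
  have hc (n : ℕ) : 0 ≤ c n := div_nonneg (by positivity) (Real.Gamma_pos_of_pos (by positivity)).le
  have hterm (n : ℕ) : c n * (Real.Gamma (α * (n + 1)) * Real.Gamma (α - 1)
        / Real.Gamma (α * (n + 1) + (α - 1)))
      = Real.Gamma (α - 1) / α * (q ^ n / Real.Gamma (α * (n + 2) - 1)) := by
    simp only [c]
    rw [Real.Gamma_add_one (hs n).ne', show α * (n + 1) + (α - 1) = α * (n + 2) - 1 by ring]
    have := (Real.Gamma_pos_of_pos (hs n)).ne'
    field_simp
  have hseries (x : ℝ) (hx : 0 < x) :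
      x ^ (α - 1) * mittagLefflerDeriv α (q * x ^ α) * (1 - x) ^ (α - 2)
        = ∑' n, c n * (x ^ (α * (n + 1) - 1) * (1 - x) ^ ((α - 1) - 1)) := by
    rw [mittagLefflerDeriv, ← tsum_mul_left, ← tsum_mul_right]
    refine tsum_congr fun n => ?_
    rw [show α * (n + 1) - 1 = (α - 1) + α * n by ring, Real.rpow_add hx, Real.rpow_mul hx.le,
      Real.rpow_natCast, show α - 1 - 1 = α - 2 by ring]
    ring
  have hsum : Summable fun n : ℕ => q ^ n / Real.Gamma (α * (n + 2) - 1) :=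
    summable_pow_div_Gamma_of_le (s := fun n : ℕ => α * (n + 2) - 1)
      (fun n => by nlinarith [n.cast_nonneg (α := ℝ)]) q
  calc _ = ∫ x in (0 : ℝ)..1, ∑' n, c n * (x ^ (α * (n + 1) - 1) * (1 - x) ^ ((α - 1) - 1)) := by
        refine intervalIntegral.integral_congr_ae (Filter.Eventually.of_forall fun x hx => ?_)
        rw [uIoc_of_le zero_le_one] at hx
        exact hseries x hx.1
    _ = ∑' n, c n * (Real.Gamma (α * (n + 1)) * Real.Gamma (α - 1)
          / Real.Gamma (α * (n + 1) + (α - 1))) := by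
        refine integral_tsum_mul_rpow_mul_one_sub_rpow hs (by linarith) ?_
        refine ((hsum.mul_left (Real.Gamma (α - 1) / α)).congr fun n => ?_)
        rw [Real.norm_of_nonneg (hc n), hterm]
    _ = _ := by rw [tsum_congr hterm, tsum_mul_left]

theorem mul_mittagLefflerDeriv2_add_mul_mittagLefflerDeriv_sub_eq_tsum {α q : ℝ} (hα : 1 < α)
    (hq : 0 < q) :
    α * q * mittagLefflerDeriv2 α q + (α - 1) * mittagLefflerDeriv α q
        - (α - 1) / Real.Gamma (α + 1)
      = q / α * ∑' n : ℕ, q ^ n / Real.Gamma (α * (n + 2) - 1) := by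
  set a : ℕ → ℝ := fun n => (n + 2) * (n + 1) * q ^ n / Real.Gamma (α * (n + 2) + 1)
  set b : ℕ → ℝ := fun n => (n + 1) * q ^ n / Real.Gamma (α * (n + 1) + 1)
  set w : ℕ → ℝ := fun n => q ^ n / Real.Gamma (α * (n + 2) - 1)
  have hΓ (n : ℕ) : 0 < Real.Gamma (α * (n + 2) - 1) :=
    Real.Gamma_pos_of_pos (by nlinarith [n.cast_nonneg (α := ℝ)])
  have hcombine (n : ℕ) : α * q * a n + (α - 1) * b (n + 1) = q / α * w n := by
    have hs : α * (n + 2) ≠ 0 := by positivity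
    have hs' : α * (n + 2) - 1 ≠ 0 := (sub_pos.2 (by nlinarith [n.cast_nonneg (α := ℝ)])).ne'
    simp only [a, b, w]
    push_cast
    rw [show α * (n + 1 + 1) = α * (n + 2) by ring,
      Real.Gamma_add_one_eq_mul_mul_Gamma_sub_one hs hs']
    have := (hΓ n).ne'
    field_simp
    ring
  have ha (n : ℕ) : 0 ≤ a n :=
    div_nonneg (by positivity) (Real.Gamma_nonneg_of_nonneg (by positivity))
  have hb (n : ℕ) : 0 ≤ b n :=
    div_nonneg (by positivity) (Real.Gamma_nonneg_of_nonneg (by positivity))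
  have hw : Summable w := summable_pow_div_Gamma_of_le (s := fun n : ℕ => α * (n + 2) - 1)
    (fun n => by nlinarith [n.cast_nonneg (α := ℝ)]) q
  -- Both summands of `hcombine` are nonnegative, so each is dominated by the summable right side.
  have hsuma : Summable a := by
    refine Summable.of_nonneg_of_le ha (fun n => ?_) ((hw.mul_left (q / α)).div_const (α * q))
    rw [le_div_iff₀ (by positivity), ← hcombine]
    nlinarith [mul_nonneg (by linarith : 0 ≤ α - 1) (hb (n + 1))]
  have hsumb : Summable fun n => b (n + 1) := by
    refine Summable.of_nonneg_of_le (fun n => hb (n + 1)) (fun n => ?_)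
      ((hw.mul_left (q / α)).div_const (α - 1))
    rw [le_div_iff₀ (by linarith), ← hcombine]
    nlinarith [mul_nonneg (by positivity : 0 ≤ α * q) (ha n)]
  have hb0 : b 0 = 1 / Real.Gamma (α + 1) := by simp [b]
  calc _ = α * q * ∑' n, a n + (α - 1) * (b 0 + ∑' n, b (n + 1))
          - (α - 1) / Real.Gamma (α + 1) := by
        rw [mittagLefflerDeriv2, mittagLefflerDeriv, tsum_eq_zero_add' hsumb]
    _ = ∑' n, (α * q * a n + (α - 1) * b (n + 1)) := by
        rw [(hsuma.mul_left _).tsum_add (hsumb.mul_left _), tsum_mul_left, tsum_mul_left, hb0]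
        ring
    _ = _ := by simp only [hcombine, tsum_mul_left]

theorem mittagLefflerDeriv_integral_identity_general
    (α q : ℝ) (hα₁ : 1 < α) (hq : 0 < q) :
    ∫ x in (0 : ℝ)..1, x ^ (α - 1) * mittagLefflerDeriv α (q * x ^ α) * (1 - x) ^ (α - 2)
      = (Real.Gamma (α - 1) / q) *
          (α * q * mittagLefflerDeriv2 α q + (α - 1) * mittagLefflerDeriv α q
            - (α - 1) / Real.Gamma (α + 1)) := by
  rw [integral_rpow_mul_mittagLefflerDeriv_mul_one_sub_rpow hα₁ hq,
    mul_mittagLefflerDeriv2_add_mul_mittagLefflerDeriv_sub_eq_tsum hα₁ hq]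
  field_simp

/-- For `1 < α ≤ 2` and `q > 0`:
`∫₀¹ x^(α-1) E_α′(q x^α) (1-x)^(α-2) dx
  = (Γ(α-1)/q) (α q E_α″(q) + (α-1) E_α′(q) - (α-1)/Γ(α+1))`. -/
theorem mittagLefflerDeriv_integral_identity
    (α q : ℝ) (hα₁ : 1 < α) (hα₂ : α ≤ 2) (hq : 0 < q) :
    ∫ x in (0 : ℝ)..1, x ^ (α - 1) * mittagLefflerDeriv α (q * x ^ α) * (1 - x) ^ (α - 2)
      = (Real.Gamma (α - 1) / q) *
          (α * q * mittagLefflerDeriv2 α q + (α - 1) * mittagLefflerDeriv α q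
            - (α - 1) / Real.Gamma (α + 1)) :=
  mittagLefflerDeriv_integral_identity_general α q hα₁ hq
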